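/- arXiv:1201.0330 — 6 statements merged into one kernel-verified Lean document; each statement's English description precedes it below -/
import Mathlib

section
/- Let $I$ be a finite index set, $\alpha_i \geq 0$ with $\sum_{i\in I}\alpha_i = 1$, and $f: I \to [0,1]$. Suppose $J \subseteq I$ satisfies $\left(\sum_{j\in J}\alpha_j f(j)\right)/\left(\sum_{j\in J}\alpha_j\right) = \sum_{i\in I}\alpha_i f(i) + \eta$ for some $\eta \in [-1,1]$ (in particular $\sum_{j\in J}\alpha_j > 0$). Then $\sum_{i\in I}\alpha_i f(i)^2 \geq \left(\sum_{i\in I}\alpha_i f(i)\right)^2 + \left(\sum_{j\in J}\alpha_j\right)\eta^2$. -/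
/-!
Centre `f` at its global mean `μ`. On `J` the centred values have weighted sum `w η`, where
`w = ∑_{j ∈ J} α j`, so Cauchy–Schwarz on `J` bounds their weighted second moment below by
`w η²`. Extending the sum from `J` to all of `I` only adds nonnegative terms, and the full
weighted second moment of `f - μ` is the variance `∑ α f² - μ²`.
-/

open Finset

section WeightedSums

variable {ι R : Type*} [Field R] (s : Finset ι) {w g : ι → R}

theorem sq_sum_mul_le_sum_mul_sum_mul_sq [LinearOrder R] [IsStrictOrderedRing R]
    (hw : ∀ i ∈ s, 0 ≤ w i) :
    (∑ i ∈ s, w i * g i) ^ 2 ≤ (∑ i ∈ s, w i) * ∑ i ∈ s, w i * g i ^ 2 :=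
  sum_sq_le_sum_mul_sum_of_sq_le_mul s hw (fun i hi => mul_nonneg (hw i hi) (sq_nonneg _))
    (fun _ _ => (by ring : _ = _).le)

theorem sum_mul_sq_le_sum_mul_sq_of_sum_mul_eq [LinearOrder R] [IsStrictOrderedRing R] {c : R}
    (hw : ∀ i ∈ s, 0 ≤ w i) (hpos : 0 < ∑ i ∈ s, w i)
    (h : ∑ i ∈ s, w i * g i = (∑ i ∈ s, w i) * c) :
    (∑ i ∈ s, w i) * c ^ 2 ≤ ∑ i ∈ s, w i * g i ^ 2 := by
  have hCS := sq_sum_mul_le_sum_mul_sum_mul_sq s (g := g) hw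
  rw [h] at hCS
  refine le_of_mul_le_mul_left ?_ hpos
  linarith

theorem sum_mul_sub_eq_of_div_eq {m η : R} (hne : ∑ i ∈ s, w i ≠ 0)
    (h : (∑ i ∈ s, w i * g i) / (∑ i ∈ s, w i) = m + η) :
    ∑ i ∈ s, w i * (g i - m) = (∑ i ∈ s, w i) * η := by
  rw [div_eq_iff hne] at h
  simp only [mul_sub, sum_sub_distrib, ← sum_mul, h]
  ring

theorem sum_mul_sub_sq_eq_of_sum_eq_one (hw : ∑ i ∈ s, w i = 1) :
    ∑ i ∈ s, w i * (g i - ∑ j ∈ s, w j * g j) ^ 2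
      = ∑ i ∈ s, w i * g i ^ 2 - (∑ i ∈ s, w i * g i) ^ 2 := by
  set μ := ∑ j ∈ s, w j * g j
  have expand : ∀ i, w i * (g i - μ) ^ 2 = w i * g i ^ 2 - 2 * μ * (w i * g i) + μ ^ 2 * w i :=
    fun i => by ring
  simp only [expand, sum_add_distrib, sum_sub_distrib, ← mul_sum, hw]
  ring

end WeightedSums

theorem defect_cauchy_schwarz_general {I : Type*} [Fintype I] (α : I → ℝ) (f : I → ℝ)
    (hα : ∀ i, 0 ≤ α i) (hsum : ∑ i, α i = 1)
    (J : Finset I) (η : ℝ)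
    (hJpos : 0 < ∑ j ∈ J, α j)
    (hdev : (∑ j ∈ J, α j * f j) / (∑ j ∈ J, α j) = (∑ i, α i * f i) + η) :
    ∑ i, α i * (f i) ^ 2 ≥ (∑ i, α i * f i) ^ 2 + (∑ j ∈ J, α j) * η ^ 2 := by
  set μ := ∑ i, α i * f i
  have hJ : ∑ j ∈ J, α j * (f j - μ) = (∑ j ∈ J, α j) * η :=
    sum_mul_sub_eq_of_div_eq J hJpos.ne' hdev
  have hJsq : (∑ j ∈ J, α j) * η ^ 2 ≤ ∑ j ∈ J, α j * (f j - μ) ^ 2 :=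
    sum_mul_sq_le_sum_mul_sq_of_sum_mul_eq J (fun i _ => hα i) hJpos hJ
  have hI : ∑ j ∈ J, α j * (f j - μ) ^ 2 ≤ ∑ i, α i * (f i - μ) ^ 2 :=
    sum_le_sum_of_subset_of_nonneg (subset_univ J) fun i _ _ => mul_nonneg (hα i) (sq_nonneg _)
  have hvar := sum_mul_sub_sq_eq_of_sum_eq_one univ (g := f) hsum
  linarith

/-- Defect version of the Cauchy-Schwarz inequality for weighted averages. -/
theorem defect_cauchy_schwarz {I : Type*} [Fintype I] (α : I → ℝ) (f : I → ℝ)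
    (hα : ∀ i, 0 ≤ α i) (hsum : ∑ i, α i = 1)
    (hf : ∀ i, f i ∈ Set.Icc (0 : ℝ) 1)
    (J : Finset I) (η : ℝ) (hη : η ∈ Set.Icc (-1 : ℝ) 1)
    (hJpos : 0 < ∑ j ∈ J, α j)
    (hdev : (∑ j ∈ J, α j * f j) / (∑ j ∈ J, α j) = (∑ i, α i * f i) + η) :
    ∑ i, α i * (f i) ^ 2 ≥ (∑ i, α i * f i) ^ 2 + (∑ j ∈ J, α j) * η ^ 2 :=
  defect_cauchy_schwarz_general α f hα hsum J η hJpos hdev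
end

section
/- Let $p$ be a prime and let $L(X_1,\dots,X_\ell) = \sum_{i=1}^{\ell}\alpha_i X_i$ be a linear form over $\mathbb{F}_p$ with $\alpha_i \in \mathbb{F}_p$. For a positive integer $d$, define the $d$-th tensor power $L^{\otimes d} \in \mathbb{F}_p^{\ell^d}$ by $(L^{\otimes d})_{(i_1,\dots,i_d)} = \prod_{j=1}^d \alpha_{i_j}$. If $a'_1,\dots,a'_m$ are linear forms over variables $(X_1,\dots,X_\ell)$ such that the span of $\{(a'_1)^{\otimes d},\dots,(a'_m)^{\otimes d}\}$ has dimension $q$, and for some $k$ the form $a'_k$ equals the coordinate projection $X_1$, then the $2m$ linear forms over $(Z, X_2,\dots,X_\ell, Y_2,\dots,Y_\ell)$ given by $a'_1(Z,X_2,\dots,X_\ell),\dots,a'_m(Z,X_2,\dots,X_\ell), a'_1(Z,Y_2,\dots,Y_\ell),\dots,a'_m(Z,Y_2,\dots,Y_\ell)$ have $d$-th tensor powers whose span has dimension exactly $2q - 1$. -/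
/-!
The tensor powers of the first copy vanish off the `d`-tuples of first-copy variables, so
restricting to those tuples is injective on their span and maps it onto the span of the
`(a'ⱼ)^{⊗d}`; the same holds for the second copy, so each copy spans a space of dimension `q`.
A vector in both spans is supported on the tuples whose entries all lie in both copies, i.e. on
the single tuple `(Z, …, Z)`, so the intersection is the line through `Z^{⊗d} = (a'ₖ)^{⊗d}`, and
Grassmann's formula gives `q + q - 1`.
-/

/-- The `d`-th tensor power of a linear form with coefficient vector `α` over variable set `V`:
the vector in `(ZMod p)^(V^d)` whose `(i₁,…,i_d)` entry is `∏ⱼ α (iⱼ)`. -/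
def tpow {p : ℕ} (d : ℕ) {V : Type*} (α : V → ZMod p) : (Fin d → V) → ZMod p :=
  fun i => ∏ j, α (i j)

open Function Set Submodule Module

section SupportedOn

variable (K : Type*) [Semiring K] {ι : Type*}

def supportedOn (s : Set ι) : Submodule K (ι → K) where
  carrier := {g | support g ⊆ s}
  zero_mem' := by simp
  add_mem' hf hg := (support_add _ _).trans (union_subset hf hg)
  smul_mem' c _ hg := (support_const_smul_subset c _).trans hg

variable {K}

theorem mem_supportedOn {s : Set ι} {g : ι → K} : g ∈ supportedOn K s ↔ support g ⊆ s :=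
  Iff.rfl

theorem supportedOn_inf (s t : Set ι) :
    supportedOn K s ⊓ supportedOn K t = supportedOn K (s ∩ t) := by
  ext g
  simp only [Submodule.mem_inf, mem_supportedOn, subset_inter_iff]

theorem supportedOn_singleton [DecidableEq ι] (c : ι) :
    supportedOn K {c} = K ∙ Pi.single c 1 := by
  apply le_antisymm
  · intro g hg
    refine mem_span_singleton.2 ⟨g c, funext fun i => ?_⟩
    by_cases hi : i = c
    · subst hi; simp
    · simp [hi, notMem_support.1 fun h => hi (hg h)]
  · rw [span_singleton_le_iff_mem, mem_supportedOn]
    exact Pi.support_single_subset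

theorem injOn_funLeft_supportedOn {κ : Type*} (f : κ → ι) :
    InjOn (LinearMap.funLeft K K f) (supportedOn K (range f)) := by
  intro g₁ hg₁ g₂ hg₂ h
  funext i
  by_cases hi : i ∈ range f
  · obtain ⟨x, rfl⟩ := hi
    exact congrFun h x
  · rw [notMem_support.1 fun h => hi (hg₁ h), notMem_support.1 fun h => hi (hg₂ h)]

end SupportedOn

theorem Submodule.finrank_map_eq_of_injOn {K M N : Type*} [Ring K] [StrongRankCondition K]
    [AddCommGroup M] [Module K M] [AddCommGroup N] [Module K N]
    (f : M →ₗ[K] N) (P : Submodule K M) (hf : InjOn f P) :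
    finrank K (P.map f) = finrank K P := by
  rw [← LinearMap.range_domRestrict, LinearMap.finrank_range_of_inj]
  exact LinearMap.injective_domRestrict_iff.2 (LinearMap.disjoint_ker_iff_injOn.2 hf)

section TensorPower

variable {p d : ℕ} {V W ι : Type*}

theorem support_tpow_subset (α : V → ZMod p) :
    support (tpow d α) ⊆ univ.pi fun _ => support α := by
  intro i hi j _ hj
  exact hi (Finset.prod_eq_zero (Finset.mem_univ j) hj)

theorem span_tpow_le_supportedOn (β : ι → V → ZMod p) {s : Set V}
    (hβ : ∀ j, support (β j) ⊆ s) :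
    span (ZMod p) (range fun j => tpow d (β j)) ≤ supportedOn (ZMod p) (univ.pi fun _ => s) :=
  span_le.2 <| range_subset_iff.2 fun j =>
    (support_tpow_subset (β j)).trans (pi_mono fun _ _ => hβ j)

theorem tpow_single [DecidableEq V] (z : V) :
    tpow d (Pi.single z (1 : ZMod p)) = Pi.single (fun _ => z) 1 := by
  funext i
  by_cases hi : i = fun _ => z
  · subst hi
    simp [tpow]
  · obtain ⟨j, hj⟩ := Function.ne_iff.1 hi
    rw [Pi.single_eq_of_ne hi]
    exact Finset.prod_eq_zero (Finset.mem_univ j) (Pi.single_eq_of_ne hj 1)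

theorem finrank_span_tpow_eq_of_comp [Fact p.Prime] (e : V → W) {α : ι → V → ZMod p}
    {β : ι → W → ZMod p} (hβ : ∀ j, support (β j) ⊆ range e) (hα : ∀ j, β j ∘ e = α j) :
    finrank (ZMod p) (span (ZMod p) (range fun j => tpow d (β j))) =
      finrank (ZMod p) (span (ZMod p) (range fun j => tpow d (α j))) := by
  have hmap : span (ZMod p) (range fun j => tpow d (α j)) =
      (span (ZMod p) (range fun j => tpow d (β j))).map
        (LinearMap.funLeft (ZMod p) (ZMod p) (Pi.map fun _ => e)) := by
    simp only [map_span, ← range_comp, ← hα]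
    rfl
  rw [hmap]
  refine (finrank_map_eq_of_injOn _ _ ((injOn_funLeft_supportedOn _).mono ?_)).symm
  rw [range_piMap]
  exact span_tpow_le_supportedOn β hβ

end TensorPower

section JuxtaposedForms

variable {K : Type*} [Zero K] {ℓ : ℕ}

/-- The variables `Z, Y₂, …, Y_ℓ` of the second copy: `Z` is shared with the first copy as
`Sum.inl 0`, and `Yᵢ₊₁` is `Sum.inr i`. -/
def secondCopy (ℓ : ℕ) : Fin (ℓ + 1) → Fin (ℓ + 1) ⊕ Fin ℓ :=
  Fin.cases (Sum.inl 0) Sum.inr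

def secondCopyForm (α : Fin (ℓ + 1) → K) : Fin (ℓ + 1) ⊕ Fin ℓ → K :=
  Sum.elim (fun v => if v = 0 then α 0 else 0) fun i => α i.succ

theorem support_sumElim_zero_subset {V W : Type*} (α : V → K) :
    support (Sum.elim α (0 : W → K)) ⊆ range Sum.inl := by
  rintro (v | w) hx
  · exact ⟨v, rfl⟩
  · exact absurd rfl hx

theorem support_secondCopyForm_subset (α : Fin (ℓ + 1) → K) :
    support (secondCopyForm α) ⊆ range (secondCopy ℓ) := by
  rintro (v | i) hx
  · by_cases hv : v = 0
    · exact ⟨0, by simp [secondCopy, hv]⟩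
    · simp [secondCopyForm, hv] at hx
  · exact ⟨i.succ, rfl⟩

theorem secondCopyForm_comp_secondCopy (α : Fin (ℓ + 1) → K) :
    secondCopyForm α ∘ secondCopy ℓ = α := by
  funext v
  cases v using Fin.cases <;> simp [secondCopyForm, secondCopy]

theorem range_inl_inter_range_secondCopy :
    range (Sum.inl : Fin (ℓ + 1) → Fin (ℓ + 1) ⊕ Fin ℓ) ∩ range (secondCopy ℓ) =
      {Sum.inl 0} := by
  ext x
  constructor
  · rintro ⟨⟨v, rfl⟩, ⟨w, hw⟩⟩
    cases w using Fin.cases with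
    | zero => simpa [secondCopy] using hw.symm
    | succ w => simp [secondCopy] at hw
  · rintro rfl
    exact ⟨⟨0, rfl⟩, ⟨0, rfl⟩⟩

variable [One K]

theorem sumElim_single_zero :
    Sum.elim (Pi.single 0 1 : Fin (ℓ + 1) → K) (0 : Fin ℓ → K) = Pi.single (Sum.inl 0) 1 := by
  funext x
  rcases x with v | i <;> simp [Pi.single_apply]

theorem secondCopyForm_single :
    secondCopyForm (Pi.single 0 1 : Fin (ℓ + 1) → K) = Pi.single (Sum.inl 0) 1 := by
  funext x
  rcases x with v | i <;> simp [secondCopyForm, Pi.single_apply, Fin.succ_ne_zero]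

end JuxtaposedForms

section JuxtaposedTensorPowers

variable {p d ℓ : ℕ} {ι : Type*}

theorem finrank_span_tpow_sumElim_zero [Fact p.Prime] {V W : Type*} (a : ι → V → ZMod p) :
    finrank (ZMod p) (span (ZMod p) (range fun j => tpow d (Sum.elim (a j) (0 : W → ZMod p)))) =
      finrank (ZMod p) (span (ZMod p) (range fun j => tpow d (a j))) :=
  finrank_span_tpow_eq_of_comp Sum.inl (fun j => support_sumElim_zero_subset (a j))
    fun _ => Sum.elim_comp_inl _ _

theorem finrank_span_tpow_secondCopyForm [Fact p.Prime] (a : ι → Fin (ℓ + 1) → ZMod p) :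
    finrank (ZMod p) (span (ZMod p) (range fun j => tpow d (secondCopyForm (a j)))) =
      finrank (ZMod p) (span (ZMod p) (range fun j => tpow d (a j))) :=
  finrank_span_tpow_eq_of_comp (secondCopy ℓ) (fun j => support_secondCopyForm_subset (a j))
    fun j => secondCopyForm_comp_secondCopy (a j)

theorem span_tpow_sumElim_zero_inf_span_tpow_secondCopyForm (a : ι → Fin (ℓ + 1) → ZMod p)
    (k : ι) (hk : a k = Pi.single 0 1) :
    span (ZMod p) (range fun j => tpow d (Sum.elim (a j) (0 : Fin ℓ → ZMod p))) ⊓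
        span (ZMod p) (range fun j => tpow d (secondCopyForm (a j))) =
      ZMod p ∙ Pi.single (fun _ => Sum.inl 0) 1 := by
  refine le_antisymm ((inf_le_inf
      (span_tpow_le_supportedOn _ fun j => support_sumElim_zero_subset (a j))
      (span_tpow_le_supportedOn _ fun j => support_secondCopyForm_subset (a j))).trans_eq ?_) ?_
  · rw [supportedOn_inf, ← pi_inter_distrib, range_inl_inter_range_secondCopy,
      univ_pi_singleton, supportedOn_singleton]
  · rw [span_singleton_le_iff_mem, ← tpow_single]
    exact ⟨subset_span ⟨k, congrArg (tpow d) (by rw [hk, sumElim_single_zero])⟩,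
      subset_span ⟨k, congrArg (tpow d) (by rw [hk, secondCopyForm_single])⟩⟩

end JuxtaposedTensorPowers

theorem dim_of_juxtaposed_forms_general {p : ℕ} [Fact p.Prime] {ℓ m d q : ℕ}
    (a : Fin m → Fin (ℓ + 1) → ZMod p) (k : Fin m)
    (hk : a k = fun v => if v = 0 then 1 else 0)
    (hq : Module.finrank (ZMod p)
        (Submodule.span (ZMod p) (Set.range fun j => tpow (p := p) d (a j))) = q) :
    Module.finrank (ZMod p)
      (Submodule.span (ZMod p)
        ((Set.range fun j : Fin m =>
            tpow (p := p) d (Sum.elim (a j) (0 : Fin ℓ → ZMod p))) ∪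
         (Set.range fun j : Fin m =>
            tpow (p := p) d (Sum.elim (fun v : Fin (ℓ + 1) => if v = 0 then a j 0 else 0)
              (fun i : Fin ℓ => a j i.succ))))) = 2 * q - 1 := by
  have hk' : a k = Pi.single 0 1 := hk.trans (funext fun v => by simp [Pi.single_apply])
  rw [span_union]
  have hdim := finrank_sup_add_finrank_inf_eq
    (span (ZMod p) (range fun j => tpow d (Sum.elim (a j) (0 : Fin ℓ → ZMod p))))
    (span (ZMod p) (range fun j => tpow d (secondCopyForm (a j))))
  rw [finrank_span_tpow_sumElim_zero, finrank_span_tpow_secondCopyForm,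
    span_tpow_sumElim_zero_inf_span_tpow_secondCopyForm a k hk',
    finrank_span_singleton (Pi.single_ne_zero_iff.2 one_ne_zero), hq] at hdim
  exact Nat.eq_sub_of_add_eq (hdim.trans (two_mul q).symm)

/-- Juxtaposing two copies of a system of linear forms sharing the single variable `Z`
(the first variable, index `0` of `Fin (ℓ+1)`), where one of the forms is exactly `Z`:
if the span of the `d`-th tensor powers of `a₁,…,a_m` has dimension `q`, then the span of the
`d`-th tensor powers of the `2m` juxtaposed forms has dimension exactly `2q - 1`. -/
theorem dim_of_juxtaposed_forms {p : ℕ} [Fact p.Prime] {ℓ m d q : ℕ} (hd : 0 < d)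
    (a : Fin m → Fin (ℓ + 1) → ZMod p) (k : Fin m)
    (hk : a k = fun v => if v = 0 then 1 else 0)
    (hq : Module.finrank (ZMod p)
        (Submodule.span (ZMod p) (Set.range fun j => tpow (p := p) d (a j))) = q) :
    Module.finrank (ZMod p)
      (Submodule.span (ZMod p)
        ((Set.range fun j : Fin m =>
            tpow (p := p) d (Sum.elim (a j) (0 : Fin ℓ → ZMod p))) ∪
         (Set.range fun j : Fin m =>
            tpow (p := p) d (Sum.elim (fun v : Fin (ℓ + 1) => if v = 0 then a j 0 else 0)
              (fun i : Fin ℓ => a j i.succ))))) = 2 * q - 1 :=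
  dim_of_juxtaposed_forms_general a k hk hq
end

section
/- Fix $d < p$ where $p$ is prime, and suppose that for every $\delta > 0$ there exists $\epsilon(\delta) > 0$ such that every $f: \mathbb{F}_p^n \to \mathbb{R}$ with $\|f\|_\infty \leq 1$ and $\|f\|_{U^{d+1}} \geq \delta$ correlates with a phase polynomial: $|\mathbb{E}_x[f(x) e^{2\pi i P(x)/p}]| \geq \epsilon(\delta)$ for some polynomial $P$ of degree at most $d$ (the inverse theorem for the Gowers norm). Let $\mathcal{B}$ be a polynomial factor of degree $d$ and complexity $C$, and let $f: \mathbb{F}_p^n \to \{0,1\}$ satisfy $\|f - \mathbb{E}[f|\mathcal{B}]\|_{U^{d+1}} \geq \delta$. Then there exists a polynomial factor $\mathcal{B}'$ of degree $d$ and complexity at most $C+1$ refining $\mathcal{B}$ such that $\|\mathbb{E}[f|\mathcal{B}']\|_2^2 \geq \|\mathbb{E}[f|\mathcal{B}]\|_2^2 + \epsilon(\delta)^2$. -/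
/-! Write `e = 𝔼[f|𝓑]`, apply the inverse theorem to `f - e` (which is bounded by `1` since `f`
and `e` take values in `[0, 1]`) to get a phase polynomial `P`, and let `𝓑'` be `𝓑` with `P`
adjoined, `e' = 𝔼[f|𝓑']`. Since `e` is constant on the cells of `𝓑'`, `e' - e = 𝔼[f - e|𝓑']`
is orthogonal to `e`, so the energy increases by exactly `‖e' - e‖₂²`. The phase `χ(P)` is also
constant on these cells, so its correlation with `f - e` equals its correlation with `e' - e`,
which is at most `‖e' - e‖₁ ≤ ‖e' - e‖₂`. -/

/-- Gowers uniformity norm of order `k` of a real function on a finite abelian group. -/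
noncomputable def gowersNorm {G : Type*} [AddCommGroup G] [Fintype G] (f : G → ℝ) (k : ℕ) : ℝ :=
  ((∑ x : G, ∑ y : Fin k → G, ∏ S : Finset (Fin k), f (x + ∑ i ∈ S, y i)) /
      (Fintype.card G : ℝ) ^ (k + 1)) ^ ((1 : ℝ) / 2 ^ k)

/-- The additive character `x ↦ e^{2πi x / p}` of `ZMod p`. -/
noncomputable def chi (p : ℕ) (x : ZMod p) : ℂ :=
  Complex.exp (2 * Real.pi * Complex.I * (x.val : ℂ) / (p : ℂ))

/-- Conditional expectation of `f` with respect to the partition induced by `B`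
(with respect to the uniform measure on the finite domain). -/
noncomputable def condExp {V : Type*} [Fintype V] {β : Type*} [DecidableEq β]
    (f : V → ℝ) (B : V → β) : V → ℝ := fun x =>
  (∑ y ∈ Finset.univ.filter (fun y => B y = B x), f y) /
    ((Finset.univ.filter (fun y => B y = B x)).card : ℝ)

open Finset

section CondExp

variable {V β : Type*} [Fintype V] [DecidableEq β]

lemma card_filter_apply_eq_pos (B : V → β) (x : V) :
    (0 : ℝ) < #{y | B y = B x} :=
  Nat.cast_pos.mpr (card_pos.mpr ⟨x, by simp⟩)

lemma condExp_factorsThrough (f : V → ℝ) (B : V → β) : (condExp f B).FactorsThrough B := by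
  intro x y h
  simp only [condExp, h]

lemma condExp_sub (f g : V → ℝ) (B : V → β) (x : V) :
    condExp (fun y => f y - g y) B x = condExp f B x - condExp g B x := by
  simp only [condExp, sum_sub_distrib, sub_div]

lemma condExp_of_factorsThrough {h : V → ℝ} {B : V → β} (hB : h.FactorsThrough B) (x : V) :
    condExp h B x = h x := by
  have hcell : ∑ y ∈ {y | B y = B x}, h y = ∑ _y ∈ {y | B y = B x}, h x :=
    sum_congr rfl fun y hy => hB (mem_filter.mp hy).2
  rw [condExp, hcell, sum_const, nsmul_eq_mul,
    mul_div_cancel_left₀ _ (card_filter_apply_eq_pos B x).ne']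

lemma condExp_mem_Icc {f : V → ℝ} (hf : ∀ x, f x ∈ Set.Icc 0 1) (B : V → β) (x : V) :
    condExp f B x ∈ Set.Icc 0 1 := by
  refine ⟨div_nonneg (sum_nonneg fun y _ => (hf y).1) (Nat.cast_nonneg _), ?_⟩
  rw [condExp, div_le_one (card_filter_apply_eq_pos B x)]
  calc ∑ y ∈ {y | B y = B x}, f y ≤ ∑ _y ∈ {y | B y = B x}, (1 : ℝ) :=
        sum_le_sum fun y _ => (hf y).2
    _ = #{y | B y = B x} := by simp

lemma sum_condExp_smul_of_factorsThrough {M : Type*} [AddCommGroup M] [Module ℝ M]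
    (f : V → ℝ) {B : V → β} {h : V → M} (hh : h.FactorsThrough B) :
    ∑ x, condExp f B x • h x = ∑ x, f x • h x := by
  set c : V → ℝ := fun y => (#{z | B z = B y} : ℝ)
  have hterm : ∀ x, condExp f B x • h x = ∑ y, if B y = B x then (f y / c y) • h y else 0 := by
    intro x
    rw [← sum_filter, condExp, sum_div, sum_smul]
    refine sum_congr rfl fun y hy => ?_
    have hyx : B y = B x := (mem_filter.mp hy).2
    simp only [c, hyx, hh hyx]
  have hcount : ∀ y, ∑ x, (if B y = B x then (f y / c y) • h y else 0) = f y • h y := by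
    intro y
    rw [← sum_filter, sum_const, ← Nat.cast_smul_eq_nsmul ℝ, smul_smul]
    simp only [c, eq_comm (a := B y)]
    rw [mul_div_cancel₀ _ (card_filter_apply_eq_pos B y).ne']
  rw [sum_congr rfl fun x _ => hterm x, sum_comm]
  exact sum_congr rfl fun y _ => hcount y

lemma sum_sq_condExp_of_factorsThrough {γ : Type*} [DecidableEq γ] (f : V → ℝ) {B : V → β}
    {B' : V → γ} (hB : B.FactorsThrough B') :
    ∑ x, condExp f B' x ^ 2
      = ∑ x, condExp f B x ^ 2 + ∑ x, (condExp f B' x - condExp f B x) ^ 2 := by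
  set e := condExp f B
  set e' := condExp f B'
  have hcross : ∑ x, e' x * e x = ∑ x, f x * e x :=
    sum_condExp_smul_of_factorsThrough f fun _ _ h => condExp_factorsThrough f B (hB h)
  have hdiag : ∑ x, e x * e x = ∑ x, f x * e x :=
    sum_condExp_smul_of_factorsThrough f (condExp_factorsThrough f B)
  have hexpand : ∑ x, (e' x - e x) ^ 2
      = ∑ x, e' x ^ 2 - ∑ x, e x ^ 2 - 2 * (∑ x, e' x * e x - ∑ x, e x * e x) := by
    simp only [mul_sub, ← sum_sub_distrib, mul_sum]
    exact sum_congr rfl fun x _ => by ring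
  rw [hexpand, hcross, hdiag]
  ring

lemma norm_sum_mul_le_sum_abs_condExp (g : V → ℝ) {B : V → β} {w : V → ℂ}
    (hw : w.FactorsThrough B) (hw1 : ∀ x, ‖w x‖ ≤ 1) :
    ‖∑ x, (g x : ℂ) * w x‖ ≤ ∑ x, |condExp g B x| := by
  simp only [← Complex.real_smul]
  rw [← sum_condExp_smul_of_factorsThrough g hw]
  refine (norm_sum_le _ _).trans (sum_le_sum fun x _ => ?_)
  rw [norm_smul, Real.norm_eq_abs]
  exact mul_le_of_le_one_right (abs_nonneg _) (hw1 x)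

lemma sum_sq_condExp_add_sq_le_of_correlation [Nonempty V] {γ : Type*} [DecidableEq γ]
    (f : V → ℝ) {B : V → β} {B' : V → γ} (hB : B.FactorsThrough B') {w : V → ℂ}
    (hw : w.FactorsThrough B') (hw1 : ∀ x, ‖w x‖ ≤ 1) {η : ℝ} (hη : 0 ≤ η)
    (hcorr : η ≤ ‖(∑ x, ((f x - condExp f B x : ℝ) : ℂ) * w x) / (Fintype.card V : ℂ)‖) :
    (∑ x, condExp f B x ^ 2) / Fintype.card V + η ^ 2
      ≤ (∑ x, condExp f B' x ^ 2) / Fintype.card V := by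
  set N : ℝ := (Fintype.card V : ℝ)
  have hN : 0 < N := Nat.cast_pos.mpr Fintype.card_pos
  have hincr : ∀ x, condExp (fun y => f y - condExp f B y) B' x
      = condExp f B' x - condExp f B x := fun x => by
    rw [condExp_sub, condExp_of_factorsThrough fun _ _ h => condExp_factorsThrough f B (hB h)]
  have hl1 : η * N ≤ ∑ x, |condExp f B' x - condExp f B x| := by
    rw [norm_div, Complex.norm_natCast, le_div_iff₀ hN] at hcorr
    simpa only [hincr] using hcorr.trans (norm_sum_mul_le_sum_abs_condExp _ hw hw1)
  have hl1_sq : (η * N) ^ 2 ≤ N * ∑ x, (condExp f B' x - condExp f B x) ^ 2 := by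
    refine (pow_le_pow_left₀ (by positivity) hl1 2).trans ?_
    simpa only [sq_abs, card_univ] using
      sq_sum_le_card_mul_sum_sq (s := univ) (f := fun x => |condExp f B' x - condExp f B x|)
  have hη_sq : η ^ 2 ≤ (∑ x, (condExp f B' x - condExp f B x) ^ 2) / N := by
    rw [le_div_iff₀ hN]
    nlinarith
  rw [sum_sq_condExp_of_factorsThrough f hB, add_div]
  linarith

end CondExp

lemma norm_chi (p : ℕ) (x : ZMod p) : ‖chi p x‖ = 1 := by
  rw [chi, show 2 * Real.pi * Complex.I * (x.val : ℂ) / (p : ℂ)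
      = ((2 * Real.pi * x.val / p : ℝ) : ℂ) * Complex.I by push_cast; ring]
  exact Complex.norm_exp_ofReal_mul_I _

theorem index_increment_general {p n : ℕ} [Fact p.Prime] (d : ℕ) (ε : ℝ → ℝ)
    (hinv : ∀ δ : ℝ, 0 < δ → 0 < ε δ ∧
      ∀ f : (Fin n → ZMod p) → ℝ, (∀ x, |f x| ≤ 1) → gowersNorm f (d + 1) ≥ δ →
        ∃ P : MvPolynomial (Fin n) (ZMod p), P.totalDegree ≤ d ∧
          ε δ ≤ ‖((∑ x : Fin n → ZMod p,
            (f x : ℂ) * chi p (MvPolynomial.eval x P)) /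
              ((Fintype.card (Fin n → ZMod p) : ℂ)))‖)
    {C : ℕ} (B : Fin C → MvPolynomial (Fin n) (ZMod p))
    (hB : ∀ i, (B i).totalDegree ≤ d)
    (f : (Fin n → ZMod p) → ℝ) (hf : ∀ x, f x = 0 ∨ f x = 1)
    (δ : ℝ) (hδ : 0 < δ)
    (hgow : gowersNorm
      (fun x => f x - condExp f (fun y => fun i => MvPolynomial.eval y (B i)) x)
      (d + 1) ≥ δ) :
    ∃ B' : Fin (C + 1) → MvPolynomial (Fin n) (ZMod p),
      (∀ i : Fin C, B' i.castSucc = B i) ∧ (∀ i, (B' i).totalDegree ≤ d) ∧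
      (∑ x : Fin n → ZMod p,
          (condExp f (fun y => fun i => MvPolynomial.eval y (B' i)) x) ^ 2) /
          (Fintype.card (Fin n → ZMod p) : ℝ)
        ≥ (∑ x : Fin n → ZMod p,
            (condExp f (fun y => fun i => MvPolynomial.eval y (B i)) x) ^ 2) /
            (Fintype.card (Fin n → ZMod p) : ℝ) + (ε δ) ^ 2 := by
  obtain ⟨hε, hcorr⟩ := hinv δ hδ
  have hf01 : ∀ x, f x ∈ Set.Icc (0 : ℝ) 1 := fun x => by rcases hf x with h | h <;> simp [h]
  have hbound : ∀ x, |f x - condExp f (fun y i => MvPolynomial.eval y (B i)) x| ≤ 1 := fun x =>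
    abs_sub_le_of_nonneg_of_le (hf01 x).1 (hf01 x).2
      (condExp_mem_Icc hf01 _ x).1 (condExp_mem_Icc hf01 _ x).2
  obtain ⟨P, hPd, hPcorr⟩ := hcorr _ hbound hgow
  have hrefines : (fun y i => MvPolynomial.eval y (B i)).FactorsThrough
      (fun y i => MvPolynomial.eval y (Fin.snoc (α := fun _ => _) B P i)) := fun x y h => by
    funext i
    simpa using congrFun h i.castSucc
  have hphase : (fun x => chi p (MvPolynomial.eval x P)).FactorsThrough
      (fun y i => MvPolynomial.eval y (Fin.snoc (α := fun _ => _) B P i)) := fun x y h => by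
    simpa using congrArg (chi p) (congrFun h (Fin.last C))
  refine ⟨Fin.snoc B P, fun i => Fin.snoc_castSucc .., ?_, ?_⟩
  · exact Fin.lastCases (by simpa using hPd) (fun i => by simpa using hB i)
  · exact sum_sq_condExp_add_sq_le_of_correlation f hrefines hphase (fun _ => (norm_chi p _).le)
      hε.le hPcorr

/-- Assuming the inverse theorem for the Gowers `U^{d+1}` norm over `𝔽_p^n` (with correlation
function `ε`), if `f : 𝔽_p^n → {0,1}` satisfies `‖f - 𝔼[f|𝓑]‖_{U^{d+1}} ≥ δ` for a polynomial
factor `𝓑` of degree `d` and complexity `C`, then there is a syntactic refinement `𝓑'` of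
degree `d` and complexity `C+1` with `‖𝔼[f|𝓑']‖₂² ≥ ‖𝔼[f|𝓑]‖₂² + ε(δ)²`. -/
theorem index_increment {p n : ℕ} [Fact p.Prime] (d : ℕ) (hdp : d < p) (ε : ℝ → ℝ)
    (hinv : ∀ δ : ℝ, 0 < δ → 0 < ε δ ∧
      ∀ f : (Fin n → ZMod p) → ℝ, (∀ x, |f x| ≤ 1) → gowersNorm f (d + 1) ≥ δ →
        ∃ P : MvPolynomial (Fin n) (ZMod p), P.totalDegree ≤ d ∧
          ε δ ≤ ‖((∑ x : Fin n → ZMod p,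
            (f x : ℂ) * chi p (MvPolynomial.eval x P)) /
              ((Fintype.card (Fin n → ZMod p) : ℂ)))‖)
    {C : ℕ} (B : Fin C → MvPolynomial (Fin n) (ZMod p))
    (hB : ∀ i, (B i).totalDegree ≤ d)
    (f : (Fin n → ZMod p) → ℝ) (hf : ∀ x, f x = 0 ∨ f x = 1)
    (δ : ℝ) (hδ : 0 < δ)
    (hgow : gowersNorm
      (fun x => f x - condExp f (fun y => fun i => MvPolynomial.eval y (B i)) x)
      (d + 1) ≥ δ) :
    ∃ B' : Fin (C + 1) → MvPolynomial (Fin n) (ZMod p),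
      (∀ i : Fin C, B' i.castSucc = B i) ∧ (∀ i, (B' i).totalDegree ≤ d) ∧
      (∑ x : Fin n → ZMod p,
          (condExp f (fun y => fun i => MvPolynomial.eval y (B' i)) x) ^ 2) /
          (Fintype.card (Fin n → ZMod p) : ℝ)
        ≥ (∑ x : Fin n → ZMod p,
            (condExp f (fun y => fun i => MvPolynomial.eval y (B i)) x) ^ 2) /
            (Fintype.card (Fin n → ZMod p) : ℝ) + (ε δ) ^ 2 :=
  index_increment_general d ε hinv B hB f hf δ hδ hgow
end

section
/- Let $p$ be prime, $n, C, C'$ integers with $C \leq C'$, and let $f : \mathbb{F}_p^n \to [R]$. Let $\mathcal{B}' : \mathbb{F}_p^n \to \mathbb{F}_p^{C'}$ be a polynomial factor syntactically refining $\mathcal{B} : \mathbb{F}_p^n \to \mathbb{F}_p^{C}$, and fix $s \in \mathbb{F}_p^{C'-C}$ and $\zeta, \beta > 0$. Assume: (i) every cell of $\mathcal{B}$ has probability at most $(1+\beta)p^{-C}$ under the uniform measure on $\mathbb{F}_p^n$; (ii) $\Pr_{c \in \mathbb{F}_p^{C}}[\exists i \in [R]: |\Pr[f(x)=i \mid \mathcal{B}(x)=c]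 - \Pr[f(x)=i \mid \mathcal{B}'(x)=(c,s)]| > \zeta] < \zeta$. Let $F$ be the $\zeta$-cleanup of $f$ with respect to $\mathcal{B}, \mathcal{B}', s$. Then $\Pr_{x}[F(x) \neq f(x)] \leq (2R + 1 + \beta)\zeta$. -/
open scoped Classical

namespace Cleanup

variable {p n C C₂ R : ℕ}

/-- `Pr[f(x) = i | 𝓑(x) = c]`: conditional probability of the value `i` within the cell `c`
of the coarse factor. -/
noncomputable def prCell (f : (Fin n → ZMod p) → Fin R) (B : (Fin n → ZMod p) → Fin C → ZMod p)
    (i : Fin R) (c : Fin C → ZMod p) : ℝ :=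
  (Nat.card {x : Fin n → ZMod p // f x = i ∧ B x = c} : ℝ) /
    (Nat.card {x : Fin n → ZMod p // B x = c} : ℝ)

/-- `Pr[f(x) = i | 𝓑'(x) = (c,s)]`: conditional probability of the value `i` within the
subcell `(c, s)` of the syntactic refinement `𝓑' = (𝓑, 𝓑₂)`. -/
noncomputable def prSubcell (f : (Fin n → ZMod p) → Fin R)
    (B : (Fin n → ZMod p) → Fin C → ZMod p) (B₂ : (Fin n → ZMod p) → Fin C₂ → ZMod p)
    (s : Fin C₂ → ZMod p) (i : Fin R) (c : Fin C → ZMod p) : ℝ :=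
  (Nat.card {x : Fin n → ZMod p // f x = i ∧ B x = c ∧ B₂ x = s} : ℝ) /
    (Nat.card {x : Fin n → ZMod p // B x = c ∧ B₂ x = s} : ℝ)

/-- A cell `c` is bad if some value's conditional probability in the cell differs from its
conditional probability in the selected subcell `(c,s)` by more than `ζ`. -/
def Bad (f : (Fin n → ZMod p) → Fin R) (B : (Fin n → ZMod p) → Fin C → ZMod p)
    (B₂ : (Fin n → ZMod p) → Fin C₂ → ZMod p) (s : Fin C₂ → ZMod p) (ζ : ℝ)
    (c : Fin C → ZMod p) : Prop :=
  ∃ i : Fin R, ζ < |prCell f B i c - prSubcell f B B₂ s i c|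

/-- The `ζ`-cleanup of `f` with respect to `𝓑`, `𝓑' = (𝓑,𝓑₂)` and `s`, given a choice
function `pop` selecting a most popular value on each subcell `(c,s)`: on bad cells, and on
values that are rare (`< ζ`) in the selected subcell, `f` is replaced by `pop`. -/
noncomputable def cleanup (f : (Fin n → ZMod p) → Fin R)
    (B : (Fin n → ZMod p) → Fin C → ZMod p) (B₂ : (Fin n → ZMod p) → Fin C₂ → ZMod p)
    (s : Fin C₂ → ZMod p) (ζ : ℝ) (pop : (Fin C → ZMod p) → Fin R) :
    (Fin n → ZMod p) → Fin R := fun x =>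
  if Bad f B B₂ s ζ (B x) then pop (B x)
  else if prSubcell f B B₂ s (f x) (B x) < ζ then pop (B x)
  else f x

/-!
A point where the cleanup differs from `f` lies either in a bad cell, or in a good cell `c` with
a value `i` such that `Pr[f = i | (c,s)] < ζ`, hence `Pr[f = i | c] < 2ζ`. Fewer than `ζ p^C`
cells are bad and each holds at most `(1 + β) p^(n-C)` points, which accounts for `(1 + β) ζ`.
Within each cell, each of the `R` values with frequency below `2ζ` accounts for less than a
`2ζ`-fraction of the cell, which gives the remaining `2Rζ`.
-/

open Finset

section Counting

variable {α ι κ : Type*} [Fintype α] [Fintype κ] [DecidableEq κ] (B : α → κ)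

theorem card_filter_comp_le_mul (P : κ → Prop) [DecidablePred P] {M : ℝ}
    (hM : ∀ c, (#{x | B x = c} : ℝ) ≤ M) :
    (#{x | P (B x)} : ℝ) ≤ #{c | P c} * M := by
  rw [card_eq_sum_card_fiberwise (f := B) (t := {c | P c}) (by intro x; simp), Nat.cast_sum]
  calc ∑ c ∈ {c | P c}, (#{x ∈ {x | P (B x)} | B x = c} : ℝ)
      ≤ ∑ c ∈ {c | P c}, M := by
        gcongr with c
        exact (hM c).trans' (mod_cast card_le_card (filter_subset_filter _ (filter_subset _ _)))
    _ = #{c | P c} * M := by rw [sum_const, nsmul_eq_mul]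

theorem card_filter_comp_div_le [Nonempty α] (P : κ → Prop) [DecidablePred P] {β ζ : ℝ}
    (hcell : ∀ c, (#{x | B x = c} : ℝ) / Fintype.card α ≤ (1 + β) / Fintype.card κ)
    (hP : (#{c | P c} : ℝ) / Fintype.card κ ≤ ζ) :
    (#{x | P (B x)} : ℝ) / Fintype.card α ≤ (1 + β) * ζ := by
  have hα : (0 : ℝ) < Fintype.card α := mod_cast Fintype.card_pos
  have hκ : (0 : ℝ) < Fintype.card κ :=
    mod_cast Fintype.card_pos_iff.mpr ⟨B (Classical.arbitrary α)⟩
  set M := (1 + β) / Fintype.card κ * Fintype.card α with hMdef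
  have hM (c : κ) : (#{x | B x = c} : ℝ) ≤ M := (div_le_iff₀ hα).mp (hcell c)
  have hM₀ : 0 ≤ M := (Nat.cast_nonneg _).trans (hM (B (Classical.arbitrary α)))
  rw [div_le_iff₀ hα]
  calc (#{x | P (B x)} : ℝ) ≤ #{c | P c} * M := card_filter_comp_le_mul B P hM
    _ ≤ ζ * Fintype.card κ * M := by gcongr; exact (div_le_iff₀ hκ).mp hP
    _ = (1 + β) * ζ * Fintype.card α := by rw [hMdef]; field_simp

noncomputable def rarePoints [DecidableEq ι] (f : α → ι) (t : ℝ) : Finset α :=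
  {x | (#{y | f y = f x ∧ B y = B x} : ℝ) < t * #{y | B y = B x}}

theorem card_rarePoints_div_le [Fintype ι] [DecidableEq ι] (f : α → ι) {t : ℝ} (ht : 0 ≤ t) :
    (#(rarePoints B f t) : ℝ) / Fintype.card α ≤ t * Fintype.card ι := by
  refine div_le_of_le_mul₀ (Nat.cast_nonneg _) (by positivity) ?_
  set S := rarePoints B f t
  have hfiber (c : κ) (i : ι) : (#{x ∈ S | (B x, f x) = (c, i)} : ℝ) ≤ t * #{y | B y = c} := by
    rcases eq_empty_or_nonempty {x ∈ S | (B x, f x) = (c, i)} with h | ⟨x₀, hx₀⟩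
    · rw [h, card_empty, Nat.cast_zero]
      positivity
    · simp only [S, rarePoints, mem_filter, mem_univ, true_and, Prod.mk.injEq] at hx₀
      obtain ⟨hrare, rfl, rfl⟩ := hx₀
      refine le_trans ?_ hrare.le
      gcongr
      intro y
      simp +contextual [and_comm]
  have hcells : (Fintype.card α : ℝ) = ∑ c, (#{y | B y = c} : ℝ) := by
    rw [← card_univ, card_eq_sum_card_fiberwise (f := B) (t := univ) (by simp), Nat.cast_sum]
  calc (#S : ℝ) = ∑ ci : κ × ι, (#{x ∈ S | (B x, f x) = ci} : ℝ) := by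
        rw [card_eq_sum_card_fiberwise (f := fun x => (B x, f x)) (t := univ) (by simp),
          Nat.cast_sum]
    _ ≤ ∑ ci : κ × ι, t * #{y | B y = ci.1} := sum_le_sum fun ci _ => hfiber ci.1 ci.2
    _ = t * Fintype.card ι * Fintype.card α := by
        simp only [Fintype.sum_prod_type, sum_const, card_univ, nsmul_eq_mul, hcells, mul_sum]
        ring_nf

end Counting

section

variable {f : (Fin n → ZMod p) → Fin R} {B : (Fin n → ZMod p) → Fin C → ZMod p}
  {B₂ : (Fin n → ZMod p) → Fin C₂ → ZMod p} {s : Fin C₂ → ZMod p} {ζ : ℝ}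

theorem prCell_lt_two_mul_of_not_bad {i : Fin R} {c : Fin C → ZMod p}
    (hc : ¬Bad f B B₂ s ζ c) (hi : prSubcell f B B₂ s i c < ζ) : prCell f B i c < 2 * ζ := by
  have hclose : prCell f B i c - prSubcell f B B₂ s i c ≤ ζ :=
    (le_abs_self _).trans (not_lt.mp fun h => hc ⟨i, h⟩)
  linarith

theorem bad_or_prCell_lt_of_cleanup_ne {pop : (Fin C → ZMod p) → Fin R} {x : Fin n → ZMod p}
    (hx : cleanup f B B₂ s ζ pop x ≠ f x) :
    Bad f B B₂ s ζ (B x) ∨ prCell f B (f x) (B x) < 2 * ζ := by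
  by_cases hbad : Bad f B B₂ s ζ (B x)
  · exact .inl hbad
  by_cases hrare : prSubcell f B B₂ s (f x) (B x) < ζ
  · exact .inr (prCell_lt_two_mul_of_not_bad hbad hrare)
  simp only [cleanup, hbad, hrare, if_false, ne_eq, not_true_eq_false] at hx

theorem mem_rarePoints_of_prCell_lt [NeZero p] {x : Fin n → ZMod p} {t : ℝ}
    (h : prCell f B (f x) (B x) < t) : x ∈ rarePoints B f t := by
  have hpos : (0 : ℝ) < #{y | B y = B x} := mod_cast card_pos.mpr ⟨x, by simp⟩
  simp only [prCell, Nat.card_eq_fintype_card, Fintype.card_subtype] at h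
  simpa [rarePoints] using (div_lt_iff₀ hpos).mp h

end

theorem cleanup_close_general [Fact p.Prime] (f : (Fin n → ZMod p) → Fin R)
    (B : (Fin n → ZMod p) → Fin C → ZMod p) (B₂ : (Fin n → ZMod p) → Fin C₂ → ZMod p)
    (s : Fin C₂ → ZMod p) (ζ β : ℝ)
    (pop : (Fin C → ZMod p) → Fin R)
    (hcellsize : ∀ c : Fin C → ZMod p,
      (Nat.card {x : Fin n → ZMod p // B x = c} : ℝ) / (p : ℝ) ^ n ≤ (1 + β) / (p : ℝ) ^ C)
    (hbad : (Nat.card {c : Fin C → ZMod p // Bad f B B₂ s ζ c} : ℝ) / (p : ℝ) ^ C < ζ) :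
    (Nat.card {x : Fin n → ZMod p // cleanup f B B₂ s ζ pop x ≠ f x} : ℝ) / (p : ℝ) ^ n
      ≤ (2 * R + 1 + β) * ζ := by
  have hpoints : (Fintype.card (Fin n → ZMod p) : ℝ) = p ^ n := by simp [ZMod.card]
  have hcells : (Fintype.card (Fin C → ZMod p) : ℝ) = p ^ C := by simp [ZMod.card]
  simp only [Nat.card_eq_fintype_card, Fintype.card_subtype, ← hpoints, ← hcells]
    at hcellsize hbad ⊢
  have hζ : 0 < ζ := (div_nonneg (Nat.cast_nonneg _) (Nat.cast_nonneg _)).trans_lt hbad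
  have hbadPts := card_filter_comp_div_le B (Bad f B B₂ s ζ) hcellsize hbad.le
  have hrarePts := card_rarePoints_div_le B f (t := 2 * ζ) (by positivity)
  have hsub : ({x | cleanup f B B₂ s ζ pop x ≠ f x} : Finset _) ⊆
      ({x | Bad f B B₂ s ζ (B x)} : Finset _) ∪ rarePoints B f (2 * ζ) := by
    intro x
    simp only [mem_filter, mem_union, mem_univ, true_and]
    exact fun hx => (bad_or_prCell_lt_of_cleanup_ne hx).imp_right mem_rarePoints_of_prCell_lt
  calc (#{x | cleanup f B B₂ s ζ pop x ≠ f x} : ℝ) / Fintype.card (Fin n → ZMod p)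
      ≤ (#{x | Bad f B B₂ s ζ (B x)} + #(rarePoints B f (2 * ζ)) : ℝ) /
          Fintype.card (Fin n → ZMod p) := by
        gcongr
        exact_mod_cast (card_le_card hsub).trans (card_union_le _ _)
    _ ≤ (1 + β) * ζ + 2 * ζ * R := by
        rw [add_div]
        simpa only [Fintype.card_fin] using add_le_add hbadPts hrarePts
    _ = (2 * R + 1 + β) * ζ := by ring

/-- The cleanup lemma: if every cell of `𝓑` has probability at most `(1+β)p^{-C}` and fewer
than a `ζ`-fraction of the cells are bad, then the `ζ`-cleanup `F` of `f` is
`(2R+1+β)ζ`-close to `f`. -/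
theorem cleanup_close [Fact p.Prime] (f : (Fin n → ZMod p) → Fin R)
    (B : (Fin n → ZMod p) → Fin C → ZMod p) (B₂ : (Fin n → ZMod p) → Fin C₂ → ZMod p)
    (s : Fin C₂ → ZMod p) (ζ β : ℝ)
    (pop : (Fin C → ZMod p) → Fin R)
    (hpop : ∀ (c : Fin C → ZMod p) (i : Fin R),
      Nat.card {x : Fin n → ZMod p // f x = i ∧ B x = c ∧ B₂ x = s} ≤
        Nat.card {x : Fin n → ZMod p // f x = pop c ∧ B x = c ∧ B₂ x = s})
    (hcellsize : ∀ c : Fin C → ZMod p,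
      (Nat.card {x : Fin n → ZMod p // B x = c} : ℝ) / (p : ℝ) ^ n ≤ (1 + β) / (p : ℝ) ^ C)
    (hbad : (Nat.card {c : Fin C → ZMod p // Bad f B B₂ s ζ c} : ℝ) / (p : ℝ) ^ C < ζ) :
    (Nat.card {x : Fin n → ZMod p // cleanup f B B₂ s ζ pop x ≠ f x} : ℝ) / (p : ℝ) ^ n
      ≤ (2 * R + 1 + β) * ζ :=
  cleanup_close_general f B B₂ s ζ β pop hcellsize hbad

end Cleanup
end

section
/- Let $f : \mathbb{F}_p^n \to [R]$ and let $\mathcal{B}$ be a polynomial factor on $\mathbb{F}_p^n$ with defining polynomials of degrees $d_1,\dots,d_C$, all less than $p$. Define the big picture function $f_\mathcal{B} : \mathbb{F}_p^C \to 2^{[R]}$ by $f_\mathcal{B}(y) = \{f(x) : \mathcal{B}(x) = y\}$. If $f$ induces an affine constraint $(A, \sigma)$ with $A = (a_1,\dots,a_m)$ on $\ell$ variables, i.e., there exist $x_1,\dots,x_\ell \in \mathbb{F}_p^n$ with $f(a_j(x_1,\dots,x_\ell)) = \sigma_j$ for all $j \in [m]$, then $f_\mathcal{B}$ partially $(d_1,\dots,d_C)$-induces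 $(A,\sigma)$: there exist $b_1,\dots,b_m \in \mathbb{F}_p^C$ that are consistent with respect to $A$ and $(d_1,\dots,d_C)$, and satisfy $\sigma_j \in f_\mathcal{B}(b_j)$ for all $j \in [m]$. -/
/-- Consistency of cells `b j` with respect to forms `a` and degrees `d`. -/
def Consistent {p ℓ m C : ℕ} (a : Fin m → Fin ℓ → ZMod p)
    (d : Fin C → ℕ) (b : Fin m → Fin C → ZMod p) : Prop :=
  ∀ lam : Fin C → Fin m → ZMod p,
    (∀ i, ∑ j, lam i j • tpow (p := p) (d i) (a j) = 0) →
    ∀ i, ∑ j, lam i j * b j i = 0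

/-! Put `y_j = ∑ₖ a_{jk} x_k` and `b_{j,i} = P_i(y_j)`. The polynomial `Q_i(c) = P_i(∑ₖ c_k x_k)`
in `ℓ` variables has degree at most `d_i` and `Q_i(a_j) = b_{j,i}`. Since the first coordinate
of every `a_j` is `1`, each monomial of degree at most `d_i` evaluated at `a_j` is a coordinate
of `a_j^{⊗ d_i}` (pad the monomial with the first variable), so a linear relation among the
tensor powers annihilates `∑_j λ_j Q_i(a_j)`. -/

open MvPolynomial

theorem Finsupp.exists_tuple_prod_eq_prod_pow {V M : Type*} [CommMonoid M] {d : ℕ} (z : V)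
    (s : V →₀ ℕ) (hs : Multiset.card s.toMultiset ≤ d) :
    ∃ ι : Fin d → V, ∀ g : V → M, g z = 1 → ∏ u, g (ι u) = ∏ k ∈ s.support, g k ^ s k := by
  classical
  obtain ⟨L, hL⟩ : ∃ L : List V,
      (L : Multiset V) = s.toMultiset + Multiset.replicate (d - Multiset.card s.toMultiset) z :=
    ⟨_, Multiset.coe_toList _⟩
  have hlen : L.length = d := by
    rw [← Multiset.coe_card, hL, Multiset.card_add, Multiset.card_replicate]
    omega
  subst hlen
  refine ⟨fun u => L[u], fun g hg => ?_⟩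
  simp only [Fin.getElem_fin, Fin.prod_univ_fun_getElem]
  rw [← Multiset.prod_coe, ← Multiset.map_coe, hL, Multiset.map_add,
    Multiset.prod_add, Multiset.map_replicate, Multiset.prod_replicate, hg, one_pow, mul_one,
    Finset.prod_multiset_map_count, Finsupp.toFinset_toMultiset]
  simp only [Finsupp.count_toMultiset]

theorem MvPolynomial.totalDegree_bind₁_le {σ τ R : Type*} [CommSemiring R]
    {g : σ → MvPolynomial τ R} (hg : ∀ t, (g t).totalDegree ≤ 1) (P : MvPolynomial σ R) :
    (bind₁ g P).totalDegree ≤ P.totalDegree := by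
  show (eval₂ C g P).totalDegree ≤ _
  rw [eval₂_eq]
  refine totalDegree_finsetSum_le fun s hs => ?_
  calc (C (P.coeff s) * ∏ t ∈ s.support, g t ^ s t).totalDegree
      ≤ ∑ t ∈ s.support, (g t ^ s t).totalDegree := by
        rw [← smul_eq_C_mul]
        exact (totalDegree_smul_le _ _).trans (totalDegree_finsetProd _ _)
    _ ≤ ∑ t ∈ s.support, s t :=
        Finset.sum_le_sum fun t _ => (totalDegree_pow _ _).trans
          ((Nat.mul_le_mul_left _ (hg t)).trans (mul_one _).le)
    _ ≤ P.totalDegree := le_totalDegree hs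

theorem MvPolynomial.totalDegree_sum_smul_X_le_one {σ R : Type*} [CommSemiring R] [Fintype σ]
    (c : σ → R) : (∑ k, c k • X k : MvPolynomial σ R).totalDegree ≤ 1 :=
  totalDegree_finsetSum_le fun k _ => (totalDegree_smul_le _ _).trans
    ((totalDegree_monomial_le (Finsupp.single k 1) 1).trans (by simp))

theorem MvPolynomial.eval_sum_smul_eq_eval_bind₁ {σ V R : Type*} [Fintype V] [CommSemiring R]
    (P : MvPolynomial σ R) (x : V → σ → R) (c : V → R) :
    eval (∑ k, c k • x k) P = eval c (bind₁ (fun t => ∑ k, x k t • X k) P) := by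
  unfold eval
  rw [eval₂Hom_bind₁]
  congr 2
  funext t
  simp [Finset.sum_apply, mul_comm]

theorem sum_mul_eval_eq_zero_of_sum_smul_tpow_eq_zero {p d : ℕ} {V J : Type*} [Fintype J]
    {a : J → V → ZMod p} {z : V} (ha : ∀ j, a j z = 1) {lam : J → ZMod p}
    (hlam : ∑ j, lam j • tpow d (a j) = 0) {Q : MvPolynomial V (ZMod p)}
    (hQ : Q.totalDegree ≤ d) :
    ∑ j, lam j * eval (a j) Q = 0 := by
  have hmonomial : ∀ s ∈ Q.support, ∑ j, lam j * ∏ k ∈ s.support, a j k ^ s k = 0 := by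
    intro s hs
    have hcard : Multiset.card s.toMultiset ≤ d := by
      rw [Finsupp.card_toMultiset]
      exact (le_totalDegree hs).trans hQ
    obtain ⟨ι, hι⟩ := s.exists_tuple_prod_eq_prod_pow (M := ZMod p) z hcard
    have hcoord := congrFun hlam ι
    simp only [Finset.sum_apply, Pi.smul_apply, smul_eq_mul, tpow, Pi.zero_apply] at hcoord
    rw [← hcoord]
    exact Finset.sum_congr rfl fun j _ => by rw [hι _ (ha j)]
  simp_rw [eval_eq, Finset.mul_sum]
  rw [Finset.sum_comm]
  refine Finset.sum_eq_zero fun s hs => ?_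
  simp_rw [mul_left_comm (lam _), ← Finset.mul_sum, hmonomial s hs, mul_zero]

theorem bigPicture_partially_induces_general {p n C ℓ m R : ℕ} (hℓ : 0 < ℓ)
    (a : Fin m → Fin ℓ → ZMod p) (hcoef1 : ∀ j : Fin m, a j ⟨0, hℓ⟩ = 1)
    (σ : Fin m → Fin R)
    (P : Fin C → MvPolynomial (Fin n) (ZMod p)) (d : Fin C → ℕ)
    (hdeg : ∀ i, (P i).totalDegree ≤ d i)
    (f : (Fin n → ZMod p) → Fin R)
    (x : Fin ℓ → Fin n → ZMod p)
    (hx : ∀ j : Fin m, f (∑ k, a j k • x k) = σ j) :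
    ∃ b : Fin m → Fin C → ZMod p,
      Consistent a d b ∧
      ∀ j : Fin m, ∃ y : Fin n → ZMod p,
        (∀ i, MvPolynomial.eval y (P i) = b j i) ∧ f y = σ j := by
  refine ⟨fun j i => eval (∑ k, a j k • x k) (P i), fun lam hlam i => ?_,
    fun j => ⟨_, fun i => rfl, hx j⟩⟩
  simp only [eval_sum_smul_eq_eval_bind₁]
  exact sum_mul_eval_eq_zero_of_sum_smul_tpow_eq_zero hcoef1 (hlam i)
    ((totalDegree_bind₁_le (fun t => totalDegree_sum_smul_X_le_one _) _).trans (hdeg i))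

/-- If `f : 𝔽_p^n → [R]` induces the affine constraint `(A,σ)` at some point, then the big
picture function of `f` with respect to a polynomial factor of degrees `d₁,…,d_C < p`
partially `(d₁,…,d_C)`-induces `(A,σ)`: there are consistent cells `b₁,…,b_m` such that each
`σ_j` is attained by `f` inside the cell `b_j`. -/
theorem bigPicture_partially_induces {p n C ℓ m R : ℕ} [Fact p.Prime] (hℓ : 0 < ℓ)
    (a : Fin m → Fin ℓ → ZMod p) (hcoef1 : ∀ j : Fin m, a j ⟨0, hℓ⟩ = 1)
    (σ : Fin m → Fin R)
    (P : Fin C → MvPolynomial (Fin n) (ZMod p)) (d : Fin C → ℕ)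
    (hdeg : ∀ i, (P i).totalDegree ≤ d i) (hdp : ∀ i, d i < p)
    (f : (Fin n → ZMod p) → Fin R)
    (x : Fin ℓ → Fin n → ZMod p)
    (hx : ∀ j : Fin m, f (∑ k, a j k • x k) = σ j) :
    ∃ b : Fin m → Fin C → ZMod p,
      Consistent a d b ∧
      ∀ j : Fin m, ∃ y : Fin n → ZMod p,
        (∀ i, MvPolynomial.eval y (P i) = b j i) ∧ f y = σ j :=
  bigPicture_partially_induces_general hℓ a hcoef1 σ P d hdeg f x hx
end

section
/- Let $X$ be a finite probability space, $\gamma > 0$, $h : \mathbb{N} \to \mathbb{N}$ monotone non-decreasing, and $f : X \to \{0,1\}$. Call a partition $\mathcal{B}$ of $X$ (with complexity $|\mathcal{B}|$, the number of its defining labels) $(h,\gamma)$-robust if no refinement $\mathcal{B}'$ of $\mathcal{B}$ with $|\mathcal{B}'| \leq h(|\mathcal{B}|)$ satisfies $\|\mathbb{E}[f|\mathcal{B}']\|_2^2 \geq \|\mathbb{E}[f|\mathcal{B}]\|_2^2 + \gamma$. Then for any initial partition $\mathcal{B}_0$, there exists a refinement $\mathcal{B}$ of $\mathcal{B}_0$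 that is $(h,\gamma)$-robust and satisfies $|\mathcal{B}| \leq k_{\lceil 1/\gamma \rceil}$, where $k_0 = |\mathcal{B}_0|$ and $k_{i+1} = h(k_i) + |\mathcal{B}_0|$. In particular, the iterative process of replacing a non-robust partition by an index-increasing refinement terminates after at most $1/\gamma$ steps, since $0 \leq \|\mathbb{E}[f|\mathcal{P}]\|_2^2 \leq 1$ for every partition $\mathcal{P}$ and the index is monotone under refinement. -/
open scoped Classical

/-- The density index `‖𝔼[f|B]‖₂²` of the partition of `X` induced by `B : X → Fin k`,
with respect to the uniform measure. -/
noncomputable def indd {X : Type*} [Fintype X] {k : ℕ} (f : X → ℝ) (B : X → Fin k) : ℝ :=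
  (∑ x, ((∑ y ∈ Finset.univ.filter (fun y => B y = B x), f y) /
      ((Finset.univ.filter (fun y => B y = B x)).card : ℝ)) ^ 2) / (Fintype.card X : ℝ)

/-- A partition `B` (of complexity `k`) is `(h,γ)`-robust for `f` if no refinement `B'` of
complexity at most `h k` increases the density index by `γ` or more. -/
def Robust {X : Type*} [Fintype X] {k : ℕ} (f : X → ℝ) (B : X → Fin k)
    (h : ℕ → ℕ) (γ : ℝ) : Prop :=
  ∀ k' : ℕ, k' ≤ h k → ∀ B' : X → Fin k',
    (∀ x y : X, B' x = B' y → B x = B y) → indd f B' < indd f B + γ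

/-!
Iterate the energy-increment argument: while the current refinement `B` of `B₀` is not
robust, replace it by a witnessing refinement, which raises the density index by at least
`γ`. After `i` rounds the index is at least `i γ`, and since the index never exceeds `1`
a partition of index at least `1` is automatically robust; so the process stops within
`⌈1/γ⌉` rounds. Monotonicity of `h` keeps the complexity after `i` rounds below `k_i`.
-/

def Refines {X : Type*} {k k' : ℕ} (B' : X → Fin k') (B : X → Fin k) : Prop :=
  ∀ x y : X, B' x = B' y → B x = B y

theorem Refines.refl {X : Type*} {k : ℕ} (B : X → Fin k) : Refines B B :=
  fun _ _ hxy => hxy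

theorem Refines.trans {X : Type*} {k k' k'' : ℕ} {B'' : X → Fin k''} {B' : X → Fin k'}
    {B : X → Fin k} (h₁ : Refines B'' B') (h₂ : Refines B' B) : Refines B'' B :=
  fun x y hxy => h₂ x y (h₁ x y hxy)

theorem abs_sum_div_card_le_one {X : Type*} {f : X → ℝ} (hf : ∀ x, |f x| ≤ 1) {s : Finset X}
    (hs : s.Nonempty) : |(∑ y ∈ s, f y) / (s.card : ℝ)| ≤ 1 := by
  have hcard : (0 : ℝ) < s.card := by exact_mod_cast hs.card_pos
  rw [abs_div, Nat.abs_cast, div_le_one hcard]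
  calc |∑ y ∈ s, f y| ≤ ∑ y ∈ s, |f y| := Finset.abs_sum_le_sum_abs _ _
    _ ≤ ∑ _y ∈ s, (1 : ℝ) := Finset.sum_le_sum fun y _ => hf y
    _ = s.card := by simp

section DensityIndex

variable {X : Type*} [Fintype X] {k : ℕ}

theorem indd_nonneg (f : X → ℝ) (B : X → Fin k) : 0 ≤ indd f B :=
  div_nonneg (Finset.sum_nonneg fun _ _ => sq_nonneg _) (Nat.cast_nonneg _)

theorem indd_le_one {f : X → ℝ} (hf : ∀ x, |f x| ≤ 1) (B : X → Fin k) : indd f B ≤ 1 := by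
  refine div_le_one_of_le₀ ?_ (Nat.cast_nonneg _)
  calc ∑ x, ((∑ y ∈ Finset.univ.filter (fun y => B y = B x), f y) /
        ((Finset.univ.filter (fun y => B y = B x)).card : ℝ)) ^ 2
      ≤ ∑ _x : X, (1 : ℝ) := Finset.sum_le_sum fun x _ =>
        (sq_le_one_iff_abs_le_one _).mpr
          (abs_sum_div_card_le_one hf ⟨x, Finset.mem_filter.mpr ⟨Finset.mem_univ x, rfl⟩⟩)
    _ = Fintype.card X := by simp

end DensityIndex

section Robust

variable {X : Type*} [Fintype X] {k : ℕ} {f : X → ℝ} {B : X → Fin k} {h : ℕ → ℕ} {γ : ℝ}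

theorem exists_refinement_of_not_robust (hB : ¬Robust f B h γ) :
    ∃ k' ≤ h k, ∃ B' : X → Fin k', Refines B' B ∧ indd f B + γ ≤ indd f B' := by
  simpa [Robust, Refines] using hB

theorem robust_of_one_le_indd (hf : ∀ x, |f x| ≤ 1) (hγ : 0 < γ) (hB : 1 ≤ indd f B) :
    Robust f B h γ :=
  fun _ _ B' _ => by linarith [indd_le_one hf B']

end Robust

def complexityBound (h : ℕ → ℕ) (k₀ : ℕ) (i : ℕ) : ℕ :=
  Nat.rec (motive := fun _ => ℕ) k₀ (fun _ kk => h kk + k₀) i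

theorem complexityBound_succ (h : ℕ → ℕ) (k₀ i : ℕ) :
    complexityBound h k₀ (i + 1) = h (complexityBound h k₀ i) + k₀ :=
  rfl

theorem complexityBound_monotone {h : ℕ → ℕ} (hh : Monotone h) (k₀ : ℕ) :
    Monotone (complexityBound h k₀) := by
  refine monotone_nat_of_le_succ fun i => ?_
  induction i with
  | zero => exact Nat.le_add_left k₀ _
  | succ n ih => exact Nat.add_le_add_right (hh ih) k₀

theorem exists_refinement_robust_or_indd_ge {X : Type*} [Fintype X] {γ : ℝ} {h : ℕ → ℕ}
    (hh : Monotone h) (f : X → ℝ) {k₀ : ℕ} (B₀ : X → Fin k₀) (i : ℕ) :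
    ∃ k ≤ complexityBound h k₀ i, ∃ B : X → Fin k, Refines B B₀ ∧
      (Robust f B h γ ∨ i * γ ≤ indd f B) := by
  induction i with
  | zero => exact ⟨k₀, le_rfl, B₀, Refines.refl B₀, Or.inr (by simpa using indd_nonneg f B₀)⟩
  | succ n ih =>
    obtain ⟨k, hk, B, hBB₀, hB⟩ := ih
    have hstep := complexityBound_monotone hh k₀ n.le_succ
    by_cases hrob : Robust f B h γ
    · exact ⟨k, hk.trans hstep, B, hBB₀, Or.inl hrob⟩
    obtain ⟨k', hk', B', hB'B, hincr⟩ := exists_refinement_of_not_robust hrob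
    have hind : n * γ ≤ indd f B := hB.resolve_left hrob
    refine ⟨k', ?_, B', hB'B.trans hBB₀, Or.inr ?_⟩
    · rw [complexityBound_succ]
      exact (hk'.trans (hh hk)).trans (Nat.le_add_right _ _)
    · push_cast
      linarith

theorem robust_refinement_exists_general {X : Type*} [Fintype X]
    (γ : ℝ) (hγ : 0 < γ) (h : ℕ → ℕ) (hh : Monotone h)
    (f : X → ℝ) (hf : ∀ x, f x = 0 ∨ f x = 1)
    (k₀ : ℕ) (B₀ : X → Fin k₀) :
    ∃ k : ℕ, k ≤ Nat.rec (motive := fun _ => ℕ) k₀ (fun _ kk => h kk + k₀)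
        (Nat.ceil (1 / γ)) ∧
      ∃ B : X → Fin k, (∀ x y : X, B x = B y → B₀ x = B₀ y) ∧ Robust f B h γ := by
  have hf_abs : ∀ x, |f x| ≤ 1 := fun x => by rcases hf x with hx | hx <;> simp [hx]
  obtain ⟨k, hk, B, hBB₀, hB⟩ :=
    exists_refinement_robust_or_indd_ge (γ := γ) hh f B₀ (Nat.ceil (1 / γ))
  refine ⟨k, hk, B, hBB₀, hB.elim id fun hind => robust_of_one_le_indd hf_abs hγ ?_⟩
  calc (1 : ℝ) = 1 / γ * γ := by field_simp
    _ ≤ Nat.ceil (1 / γ) * γ := mul_le_mul_of_nonneg_right (Nat.le_ceil _) hγ.le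
    _ ≤ indd f B := hind

/-- Existence of robust refinements: for any initial partition `B₀` of complexity `k₀`,
there is a refinement `B` of `B₀` of complexity at most `k_{⌈1/γ⌉}` (where `k_0 = k₀` and
`k_{i+1} = h(k_i) + k₀`) that is `(h,γ)`-robust. -/
theorem robust_refinement_exists {X : Type*} [Fintype X] [Nonempty X]
    (γ : ℝ) (hγ : 0 < γ) (h : ℕ → ℕ) (hh : Monotone h)
    (f : X → ℝ) (hf : ∀ x, f x = 0 ∨ f x = 1)
    (k₀ : ℕ) (B₀ : X → Fin k₀) :
    ∃ k : ℕ, k ≤ Nat.rec (motive := fun _ => ℕ) k₀ (fun _ kk => h kk + k₀)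
        (Nat.ceil (1 / γ)) ∧
      ∃ B : X → Fin k, (∀ x y : X, B x = B y → B₀ x = B₀ y) ∧ Robust f B h γ :=
  robust_refinement_exists_general γ hγ h hh f hf k₀ B₀
end
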